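/- arXiv:0802.0837 — 4 statements merged into one kernel-verified Lean document; each statement's English description precedes it below -/
import Mathlib

section
/- Let M be a finite set, f, g : M → ℝ, and ≼ a total order on M with respect to which g is non-decreasing. For K ≥ 0, define m̂(K) as the ≼-smallest element of argmin_{m ∈ M} {f(m) + K g(m)}. Then the map K ↦ m̂(K) from [0, ∞) to M is non-increasing with respect to ≼. -/
/-!
If `m̂ K ≺ m̂ K'` for some `K ≤ K'`, then `g (m̂ K) ≤ g (m̂ K')`, so raising the weight from `K`
to `K'` penalises `m̂ K'` at least as much as `m̂ K`. Hence `m̂ K` still minimises `f + K' g`,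
and it lies strictly below `m̂ K'`, contradicting the choice of `m̂ K'` as the smallest minimiser.
-/

theorem add_mul_le_add_mul_of_le_of_le {R : Type*} [Ring R] [PartialOrder R] [IsOrderedRing R]
    {a b c d K K' : R} (h : a + K * c ≤ b + K * d) (hcd : c ≤ d) (hK : K ≤ K') :
    a + K' * c ≤ b + K' * d :=
  calc a + K' * c = a + K * c + (K' - K) * c := by noncomm_ring
    _ ≤ b + K * d + (K' - K) * d := add_le_add h (mul_le_mul_of_nonneg_left hcd (sub_nonneg.2 hK))
    _ = b + K' * d := by noncomm_ring

theorem stmt2_general {M : Type*} [LinearOrder M]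
    (f g : M → ℝ) (hg : Monotone g)
    (mhat : ℝ → M)
    (hmin : ∀ K : ℝ, 0 ≤ K → ∀ x : M, f (mhat K) + K * g (mhat K) ≤ f x + K * g x)
    (hsmallest : ∀ K : ℝ, 0 ≤ K → ∀ x : M,
      (∀ y : M, f x + K * g x ≤ f y + K * g y) → mhat K ≤ x) :
    ∀ K K' : ℝ, 0 ≤ K → K ≤ K' → mhat K' ≤ mhat K := by
  intro K K' hK hKK'
  have hK' : 0 ≤ K' := hK.trans hKK'
  by_contra! hlt
  have hmin' : ∀ y, f (mhat K) + K' * g (mhat K) ≤ f y + K' * g y := fun y =>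
    (add_mul_le_add_mul_of_le_of_le (hmin K hK (mhat K')) (hg hlt.le) hKK').trans (hmin K' hK' y)
  exact (hsmallest K' hK' (mhat K) hmin').not_gt hlt

/-- If `g` is non-decreasing for the (linear) ordering of `M` and, for each `K ≥ 0`,
`m̂ K` is the smallest minimizer of `f + K·g` over `M`, then `K ↦ m̂ K` is
non-increasing on `[0, ∞)`. -/
theorem stmt2 {M : Type*} [Fintype M] [Nonempty M] [LinearOrder M]
    (f g : M → ℝ) (hg : Monotone g)
    (mhat : ℝ → M)
    (hmin : ∀ K : ℝ, 0 ≤ K → ∀ x : M, f (mhat K) + K * g (mhat K) ≤ f x + K * g x)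
    (hsmallest : ∀ K : ℝ, 0 ≤ K → ∀ x : M,
      (∀ y : M, f x + K * g x ≤ f y + K * g y) → mhat K ≤ x) :
    ∀ K K' : ℝ, 0 ≤ K → K ≤ K' → mhat K' ≤ mhat K :=
  stmt2_general f g hg mhat hmin hsmallest
end

section
/- Let M be a finite set, f, g : M → ℝ, and ≼ a total order on M making g non-decreasing. Define m̂(K) as the ≼-smallest minimizer of f + K·g. Then there exist an integer i_max with 0 ≤ i_max ≤ card(M) − 1, an increasing sequence 0 = K₀ < K₁ < ... < K_{i_max} < K_{i_max+1} = +∞, and models m₀ ≻ m₁ ≻ ... ≻ m_{i_max} such that for every i and every K ∈ [K_i, K_{i+1}), m̂(K) = m_i. In other words, K ↦ m̂(K) is piecewise constant with at most card(M) − 1 jumps. -/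
/-!
The smallest minimizer `m̂` is antitone on `[0, ∞)`: if `m̂(K) < m̂(K')` for `K ≤ K'`, then
`g (m̂ K) ≤ g (m̂ K')` makes `m̂(K)` a minimizer at `K'` too, contradicting leastness of `m̂(K')`.
It is also locally constant to the right: every model below `m̂(K)` is strictly worse at `K`,
hence still strictly worse on some `[K, K + ε)`. A function into a well-founded linear order with
these two properties is a step function with left-closed steps: the next jump after `a` is the
infimum of the points where the value differs from the value at `a`, and the recursion stops
because the values strictly decrease. Strict decrease also bounds the number of jumps by
`card M - 1`.
-/

open Set Filter Topology

section StepFunction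

variable {α : Type*} [LinearOrder α]

def IsStepDecomposition (φ : ℝ → α) (a : ℝ) (n : ℕ) (K : ℕ → ℝ) (m : ℕ → α) : Prop :=
  K 0 = a ∧ (∀ i < n, K i < K (i + 1)) ∧ (∀ i < n, m (i + 1) < m i) ∧
    ∀ i ≤ n, ∀ x, K i ≤ x → (i < n → x < K (i + 1)) → φ x = m i

namespace IsStepDecomposition

variable {φ : ℝ → α} {a : ℝ} {n : ℕ} {K : ℕ → ℝ} {m : ℕ → α}

theorem apply_start (h : IsStepDecomposition φ a n K m) : φ a = m 0 := by
  obtain ⟨hK0, hK, -, hφ⟩ := h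
  exact hφ 0 (Nat.zero_le n) a hK0.le fun hn => hK0 ▸ hK 0 hn

theorem const (h : ∀ x, a ≤ x → φ x = φ a) :
    IsStepDecomposition φ a 0 (fun _ => a) (fun _ => φ a) :=
  ⟨rfl, nofun, nofun, fun _ _ x hx _ => h x hx⟩

theorem cons {b : ℝ} (hab : a < b) (hba : φ b < φ a) (hconst : ∀ x ∈ Ico a b, φ x = φ a)
    (h : IsStepDecomposition φ b n K m) :
    IsStepDecomposition φ a (n + 1) (fun i => Nat.casesOn i a K)
      (fun i => Nat.casesOn i (φ a) m) := by
  have hm0 := h.apply_start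
  obtain ⟨hK0, hK, hm, hφ⟩ := h
  refine ⟨rfl, ?_, ?_, ?_⟩
  · rintro (_ | i) hi
    · exact (hK0 ▸ hab :)
    · exact hK i (by omega)
  · rintro (_ | i) hi
    · exact (hm0 ▸ hba :)
    · exact hm i (by omega)
  · rintro (_ | i) hi x hax hxb
    · exact hconst x ⟨hax, hK0 ▸ hxb (Nat.succ_pos n)⟩
    · exact hφ i (by omega) x hax fun hi => hxb (by omega)

end IsStepDecomposition

variable {φ : ℝ → α}

theorem exists_first_change_of_eventually_const_nhdsGE
    (hright : ∀ x, 0 ≤ x → ∀ᶠ y in 𝓝[≥] x, φ y = φ x) {a : ℝ} (ha : 0 ≤ a)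
    (hchange : ∃ x, a ≤ x ∧ φ x ≠ φ a) :
    ∃ b, a < b ∧ φ b ≠ φ a ∧ ∀ x ∈ Ico a b, φ x = φ a := by
  set U := {x | a ≤ x ∧ φ x ≠ φ a}
  have hbdd : BddBelow U := ⟨a, fun _ hx => hx.1⟩
  have hab : a ≤ sInf U := le_csInf hchange fun _ hx => hx.1
  have hconst : ∀ x ∈ Ico a (sInf U), φ x = φ a := fun x hx => by
    by_contra hne
    exact (csInf_le hbdd ⟨hx.1, hne⟩).not_gt hx.2
  have hbU : φ (sInf U) ≠ φ a := by
    intro hb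
    obtain ⟨c, hbc, hIco⟩ :=
      mem_nhdsGE_iff_exists_Ico_subset.1 (hright _ (ha.trans hab))
    have : c ≤ sInf U := le_csInf hchange fun x hx => by
      by_contra! hxc
      rcases lt_or_ge x (sInf U) with hxb | hbx
      · exact hx.2 (hconst x ⟨hx.1, hxb⟩)
      · exact hx.2 ((hIco ⟨hbx, hxc⟩).trans hb)
    exact (mem_Ioi.1 hbc).not_ge this
  exact ⟨sInf U, hab.lt_of_ne fun h => hbU (h ▸ rfl), hbU, hconst⟩

theorem exists_isStepDecomposition [WellFoundedLT α] (hanti : AntitoneOn φ (Ici 0))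
    (hright : ∀ x, 0 ≤ x → ∀ᶠ y in 𝓝[≥] x, φ y = φ x) {a : ℝ} (ha : 0 ≤ a) :
    ∃ n K m, IsStepDecomposition φ a n K m := by
  induction hv : φ a using WellFoundedLT.induction generalizing a with
  | _ v ih =>
  subst hv
  by_cases hchange : ∃ x, a ≤ x ∧ φ x ≠ φ a
  · obtain ⟨b, hab, hne, hconst⟩ :=
      exists_first_change_of_eventually_const_nhdsGE hright ha hchange
    have hb : 0 ≤ b := ha.trans hab.le
    have hba : φ b < φ a := (hanti ha hb hab.le).lt_of_ne hne
    obtain ⟨n, K, m, h⟩ := ih (φ b) hba hb rfl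
    exact ⟨_, _, _, h.cons hab hba hconst⟩
  · push Not at hchange
    exact ⟨_, _, _, IsStepDecomposition.const hchange⟩

end StepFunction

theorem le_card_sub_one_of_succ_lt {M : Type*} [Fintype M] [Preorder M] {n : ℕ} {m : ℕ → M}
    (hm : ∀ i < n, m (i + 1) < m i) : n ≤ Fintype.card M - 1 := by
  have hinj : InjOn m (Iic n) := (strictAntiOn_Iic_of_succ_lt hm).injOn
  have := Finset.card_le_card_of_injOn m (fun _ _ => Finset.mem_univ _)
    (s := Finset.Iic n) (by simpa using hinj)
  simp only [Nat.card_Iic, Finset.card_univ, Order.add_one_le_iff] at this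
  omega

section SmallestMinimizer

variable {M : Type*} [LinearOrder M] (f g : M → ℝ)

def penalizedArgmin (K : ℝ) : Set M := {x | ∀ y, f x + K * g x ≤ f y + K * g y}

variable {f g}

theorem le_of_isLeast_penalizedArgmin (hg : Monotone g) {K K' : ℝ} (hKK' : K ≤ K') {m m' : M}
    (hm : IsLeast (penalizedArgmin f g K) m) (hm' : IsLeast (penalizedArgmin f g K') m') :
    m' ≤ m := by
  by_contra! hlt
  have hmin : m ∈ penalizedArgmin f g K' := fun y => by
    have := hm.1 m'
    have := hm'.1 y
    nlinarith [hg hlt.le]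
  exact hlt.not_ge (hm'.2 hmin)

theorem eventually_lt_of_isLeast_penalizedArgmin [Finite M] {K : ℝ} {m : M}
    (hm : IsLeast (penalizedArgmin f g K) m) :
    ∀ᶠ K' in 𝓝 K, ∀ x < m, f m + K' * g m < f x + K' * g x := by
  refine eventually_all.2 fun x => ?_
  by_cases hx : x < m
  · have hlt : f m + K * g m < f x + K * g x := by
      by_contra! hle
      exact hx.not_ge (hm.2 fun y => hle.trans (hm.1 y))
    exact (ContinuousAt.eventually_lt (by fun_prop) (by fun_prop) hlt).mono fun _ h _ => h
  · exact .of_forall fun _ hx' => absurd hx' hx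

end SmallestMinimizer

theorem stmt3_general {M : Type*} [Fintype M] [LinearOrder M]
    (f g : M → ℝ) (hg : Monotone g)
    (mhat : ℝ → M)
    (hmin : ∀ K : ℝ, 0 ≤ K → ∀ x : M, f (mhat K) + K * g (mhat K) ≤ f x + K * g x)
    (hsmallest : ∀ K : ℝ, 0 ≤ K → ∀ x : M,
      (∀ y : M, f x + K * g x ≤ f y + K * g y) → mhat K ≤ x) :
    ∃ imax : ℕ, imax ≤ Fintype.card M - 1 ∧
    ∃ Kseq : ℕ → ℝ, ∃ mseq : ℕ → M,
      Kseq 0 = 0 ∧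
      (∀ i < imax, Kseq i < Kseq (i + 1)) ∧
      (∀ i < imax, mseq (i + 1) < mseq i) ∧
      (∀ i ≤ imax, ∀ K : ℝ, Kseq i ≤ K → (i < imax → K < Kseq (i + 1)) →
        mhat K = mseq i) := by
  have hleast : ∀ K, 0 ≤ K → IsLeast (penalizedArgmin f g K) (mhat K) :=
    fun K hK => ⟨hmin K hK, hsmallest K hK⟩
  have hanti : AntitoneOn mhat (Ici 0) := fun K hK K' _ hKK' =>
    le_of_isLeast_penalizedArgmin hg hKK' (hleast K hK) (hleast K' (hK.trans hKK'))
  have hright : ∀ K, 0 ≤ K → ∀ᶠ K' in 𝓝[≥] K, mhat K' = mhat K := fun K hK => by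
    filter_upwards [nhdsWithin_le_nhds (eventually_lt_of_isLeast_penalizedArgmin (hleast K hK)),
      self_mem_nhdsWithin] with K' hlt hKK'
    refine (hanti hK (hK.trans hKK') hKK').antisymm (not_lt.1 fun h => ?_)
    exact (hlt _ h).not_ge (hmin K' (hK.trans hKK') (mhat K))
  obtain ⟨n, Kseq, mseq, hK0, hK, hm, hφ⟩ := exists_isStepDecomposition hanti hright le_rfl
  exact ⟨n, le_card_sub_one_of_succ_lt hm, Kseq, mseq, hK0, hK, hm, hφ⟩

/-- The trajectory `K ↦ m̂(K)` (smallest minimizer of `f + K·g` for the linear order,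
`g` non-decreasing) is piecewise constant: there exist `i_max ≤ card M − 1`, jump
locations `0 = K₀ < K₁ < ⋯ < K_{i_max}` (with `K_{i_max+1} = +∞`, i.e. the last
interval is `[K_{i_max}, ∞)`) and strictly decreasing models `m₀ ≻ m₁ ≻ ⋯ ≻ m_{i_max}`
such that `m̂(K) = m_i` on `[K_i, K_{i+1})`. -/
theorem stmt3 {M : Type*} [Fintype M] [Nonempty M] [LinearOrder M]
    (f g : M → ℝ) (hg : Monotone g)
    (mhat : ℝ → M)
    (hmin : ∀ K : ℝ, 0 ≤ K → ∀ x : M, f (mhat K) + K * g (mhat K) ≤ f x + K * g x)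
    (hsmallest : ∀ K : ℝ, 0 ≤ K → ∀ x : M,
      (∀ y : M, f x + K * g x ≤ f y + K * g y) → mhat K ≤ x) :
    ∃ imax : ℕ, imax ≤ Fintype.card M - 1 ∧
    ∃ Kseq : ℕ → ℝ, ∃ mseq : ℕ → M,
      Kseq 0 = 0 ∧
      (∀ i < imax, Kseq i < Kseq (i + 1)) ∧
      (∀ i < imax, mseq (i + 1) < mseq i) ∧
      (∀ i ≤ imax, ∀ K : ℝ, Kseq i ≤ K → (i < imax → K < Kseq (i + 1)) →
        mhat K = mseq i) :=
  stmt3_general f g hg mhat hmin hsmallest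
end

section
/- Let (p_λ)_{λ ∈ Λ} be nonnegative reals summing to 1 with card(Λ) ≤ n, and let (n p̂_λ)_{λ ∈ Λ} be a multinomial random vector with parameters (n; (p_λ)_λ). Then for every γ > 0, with probability at least 1 − 2 n^{−γ}, one has min_λ {n p̂_λ} ≥ (min_λ {n p_λ})/2 − 2(γ+1) ln(n). -/
/-!
Fix a cell `λ` and write `S = n p̂_λ` for its count. Evaluating the moment generating function
at `t = -log 2` gives `E[2^{-S}] = (1 - p_λ/2)^n ≤ exp(-n p_λ/2)`, so Markov's inequality bounds
`P(S ≤ n p_λ/2 - T)` by `2^{n p_λ/2 - T} exp(-n p_λ/2) ≤ exp(-T)`. With `T = 2(γ+1) ln n` this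
is `n^{-2(γ+1)}`, and a union bound over the at most `n` cells costs a factor `n`.
-/

open MeasureTheory ProbabilityTheory Finset Classical

noncomputable section

namespace ProbabilityTheory

variable {Ω Λ ι : Type*}

def cellCount [Fintype ι] (X : ι → Ω → Λ) (l : Λ) (ω : Ω) : ℕ :=
  (univ.filter fun i => X i ω = l).card

lemma cellCount_eq_sum_indicator [Fintype ι] (X : ι → Ω → Λ) (l : Λ) :
    (fun ω => (cellCount X l ω : ℝ)) = ∑ i, {ω | X i ω = l}.indicator 1 := by
  funext ω
  rw [cellCount, Finset.card_filter, Finset.sum_apply]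
  push_cast
  simp [Set.indicator_apply]

variable [MeasurableSpace Ω] {μ : Measure Ω}

lemma mgf_indicator_one [IsProbabilityMeasure μ] {A : Set Ω} (hA : MeasurableSet A) (t : ℝ) :
    mgf (A.indicator 1) μ t = 1 + (Real.exp t - 1) * μ.real A := by
  have h : (fun ω => Real.exp (t * A.indicator 1 ω)) =
      fun ω => A.indicator (fun _ => Real.exp t - 1) ω + 1 := by
    funext ω
    by_cases hω : ω ∈ A <;> simp [hω]
  rw [mgf, h, integral_add ((integrable_const _).indicator hA) (integrable_const 1),
    integral_indicator_const _ hA]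
  simp [mul_comm, add_comm]

lemma one_sub_sum_measureReal_compl_le_measureReal_iInter [Fintype ι] [IsProbabilityMeasure μ]
    {s : ι → Set Ω} (hs : ∀ i, MeasurableSet (s i)) :
    1 - ∑ i, μ.real (s i)ᶜ ≤ μ.real (⋂ i, s i) := by
  have h := measureReal_iUnion_fintype_le (μ := μ) fun i => (s i)ᶜ
  rw [← Set.compl_iInter, measureReal_compl (MeasurableSet.iInter hs), probReal_univ] at h
  linarith

variable [Fintype ι] [MeasurableSpace Λ] [MeasurableSingletonClass Λ] {X : ι → Ω → Λ}

lemma measurable_cellCount (hX : ∀ i, Measurable (X i)) (l : Λ) :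
    Measurable fun ω => (cellCount X l ω : ℝ) := by
  rw [cellCount_eq_sum_indicator]
  exact Finset.sum_induction _ Measurable (fun _ _ => Measurable.add) measurable_const fun i _ =>
    (measurable_one (α := ℝ)).indicator (hX i (measurableSet_singleton l))

lemma mgf_cellCount [IsProbabilityMeasure μ] (hX : ∀ i, Measurable (X i))
    (hindep : iIndepFun X μ) (l : Λ) (t : ℝ) :
    mgf (fun ω => (cellCount X l ω : ℝ)) μ t =
      ∏ i, (1 + (Real.exp t - 1) * μ.real {ω | X i ω = l}) := by
  have hA : ∀ i, MeasurableSet {ω | X i ω = l} := fun i => hX i (measurableSet_singleton l)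
  have hindep_indicator : iIndepFun (fun i => {ω | X i ω = l}.indicator (1 : Ω → ℝ)) μ :=
    hindep.comp (fun _ x => ({l} : Set Λ).indicator 1 x) fun _ =>
      measurable_one.indicator (measurableSet_singleton l)
  rw [cellCount_eq_sum_indicator,
    hindep_indicator.mgf_sum fun i => measurable_one.indicator (hA i)]
  simp [mgf_indicator_one (hA _)]

lemma measureReal_cellCount_le_le [IsProbabilityMeasure μ] (hX : ∀ i, Measurable (X i))
    (hindep : iIndepFun X μ) (l : Λ) (T : ℝ) :
    μ.real {ω | (cellCount X l ω : ℝ) ≤ (∑ i, μ.real {ω | X i ω = l}) / 2 - T} ≤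
      Real.exp (-T) := by
  set a := (∑ i, μ.real {ω | X i ω = l}) / 2 - T with ha_def
  -- The Chernoff step below uses `log 2 * a ≤ a`; for `a < 0` the event is empty anyway.
  rcases lt_or_ge a 0 with ha | ha
  · have hempty : {ω | (cellCount X l ω : ℝ) ≤ a} = ∅ :=
      Set.eq_empty_of_forall_notMem fun ω hω => (hω.trans_lt ha).not_ge (Nat.cast_nonneg _)
    simp [hempty, (Real.exp_pos _).le]
  have hlog2 : 0 ≤ Real.log 2 := Real.log_nonneg one_le_two
  have hint : Integrable (fun ω => Real.exp (-Real.log 2 * cellCount X l ω)) μ := by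
    refine Integrable.of_bound ((measurable_cellCount hX l).const_mul _).exp.aestronglyMeasurable 1
      (ae_of_all _ fun ω => ?_)
    rw [Real.norm_eq_abs, abs_of_pos (Real.exp_pos _), Real.exp_le_one_iff]
    exact mul_nonpos_of_nonpos_of_nonneg (neg_nonpos.2 hlog2) (Nat.cast_nonneg _)
  calc μ.real {ω | (cellCount X l ω : ℝ) ≤ a}
      ≤ Real.exp (-(-Real.log 2) * a) *
          mgf (fun ω => (cellCount X l ω : ℝ)) μ (-Real.log 2) :=
        measure_le_le_exp_mul_mgf a (neg_nonpos.2 hlog2) hint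
    _ = Real.exp (Real.log 2 * a) * ∏ i, (1 - μ.real {ω | X i ω = l} / 2) := by
        rw [mgf_cellCount hX hindep, Real.exp_neg, Real.exp_log two_pos, neg_neg]
        congr 1
        refine Finset.prod_congr rfl fun i _ => ?_
        ring
    _ ≤ Real.exp a * ∏ i, Real.exp (-(μ.real {ω | X i ω = l} / 2)) := by
        have hfactor : ∀ i, 0 ≤ 1 - μ.real {ω | X i ω = l} / 2 := fun i => by
          linarith [measureReal_le_one (μ := μ) (s := {ω | X i ω = l})]
        gcongr
        · exact Finset.prod_nonneg fun i _ => hfactor i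
        · nlinarith [Real.log_two_lt_d9]
        · exact fun i _ => hfactor i
        · exact Real.one_sub_le_exp_neg _
    _ = Real.exp (-T) := by
        rw [← Real.exp_sum, ← Real.exp_add, ha_def, Finset.sum_neg_distrib, ← Finset.sum_div]
        ring_nf

lemma one_sub_card_mul_exp_le_measureReal_forall_cellCount [Fintype Λ] [IsProbabilityMeasure μ]
    (hX : ∀ i, Measurable (X i)) (hindep : iIndepFun X μ) {p : Λ → ℝ}
    (hlaw : ∀ i l, μ.real {ω | X i ω = l} = p l) (T : ℝ) :
    1 - Fintype.card Λ * Real.exp (-T) ≤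
      μ.real {ω | ∀ l, Fintype.card ι * p l / 2 - T ≤ cellCount X l ω} := by
  have hcell : ∀ l, μ.real {ω | Fintype.card ι * p l / 2 - T ≤ cellCount X l ω}ᶜ ≤
      Real.exp (-T) := fun l => by
    have hmean : ∑ i, μ.real {ω | X i ω = l} = Fintype.card ι * p l := by simp [hlaw]
    refine le_trans (measureReal_mono fun ω hω => ?_) (measureReal_cellCount_le_le hX hindep l T)
    simp only [Set.mem_compl_iff, Set.mem_ofPred_eq, not_le, hmean] at hω ⊢
    exact hω.le
  rw [Set.ofPred_forall]
  refine le_trans ?_ (one_sub_sum_measureReal_compl_le_measureReal_iInter fun l =>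
    measurableSet_le measurable_const (measurable_cellCount hX l))
  have := Finset.sum_le_sum fun l (_ : l ∈ univ) => hcell l
  rw [sum_const, card_univ, nsmul_eq_mul] at this
  linarith

end ProbabilityTheory

theorem stmt9_general {Ω Λ : Type*} [MeasureSpace Ω] [IsProbabilityMeasure (ℙ : Measure Ω)]
    [Fintype Λ] [Nonempty Λ] [MeasurableSpace Λ] [MeasurableSingletonClass Λ]
    (n : ℕ) (hn : 0 < n) (hcard : Fintype.card Λ ≤ n)
    (p : Λ → ℝ)
    (Xi : Fin n → Ω → Λ) (hmeas : ∀ i, Measurable (Xi i))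
    (hindep : iIndepFun Xi ℙ)
    (hlaw : ∀ i l, (ℙ {ω | Xi i ω = l}).toReal = p l)
    (γ : ℝ) (hγ : 0 < γ) :
    1 - 2 * (n : ℝ) ^ (-γ) ≤
      (ℙ {ω | univ.inf' univ_nonempty
            (fun l => ((univ.filter fun i => Xi i ω = l).card : ℝ)) ≥
          univ.inf' univ_nonempty (fun l => n * p l) / 2 -
            2 * (γ + 1) * Real.log n}).toReal := by
  set T := 2 * (γ + 1) * Real.log n with hT
  have hn_pos : (0 : ℝ) < n := by exact_mod_cast hn
  have hunion : (Fintype.card Λ : ℝ) * Real.exp (-T) ≤ 2 * (n : ℝ) ^ (-γ) :=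
    calc (Fintype.card Λ : ℝ) * Real.exp (-T)
        ≤ n * (n : ℝ) ^ (-(2 * (γ + 1))) := by
          rw [hT, Real.rpow_def_of_pos hn_pos]
          gcongr
          exact le_of_eq (by ring)
      _ = (n : ℝ) ^ (1 + -(2 * (γ + 1))) := by rw [Real.rpow_add hn_pos, Real.rpow_one]
      _ ≤ (n : ℝ) ^ (-γ) :=
          Real.rpow_le_rpow_of_exponent_le (by exact_mod_cast hn) (by linarith)
      _ ≤ 2 * (n : ℝ) ^ (-γ) := by linarith [Real.rpow_nonneg hn_pos.le (-γ)]
  have hevent : {ω | ∀ l, Fintype.card (Fin n) * p l / 2 - T ≤ cellCount Xi l ω} ⊆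
      {ω | univ.inf' univ_nonempty (fun l => ((univ.filter fun i => Xi i ω = l).card : ℝ)) ≥
        univ.inf' univ_nonempty (fun l => n * p l) / 2 - T} := fun ω hω => by
    simp only [Set.mem_ofPred_eq, Fintype.card_fin, cellCount, ge_iff_le, le_inf'_iff] at hω ⊢
    intro l _
    linarith [hω l, inf'_le (fun l => (n : ℝ) * p l) (mem_univ l)]
  calc 1 - 2 * (n : ℝ) ^ (-γ) ≤ 1 - Fintype.card Λ * Real.exp (-T) := by linarith
    _ ≤ _ := one_sub_card_mul_exp_le_measureReal_forall_cellCount hmeas hindep hlaw T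
    _ ≤ _ := measureReal_mono hevent

/-- Multinomial lower deviations: if `(n p̂_λ)_λ` are the cell counts of `n` i.i.d.
categorical draws with probabilities `(p_λ)_λ`, `card Λ ≤ n`, then for every `γ > 0`,
with probability at least `1 − 2 n^{−γ}`,
`min_λ (n p̂_λ) ≥ (min_λ n p_λ)/2 − 2(γ+1) ln n`. -/
theorem stmt9 {Ω Λ : Type*} [MeasureSpace Ω] [IsProbabilityMeasure (ℙ : Measure Ω)]
    [Fintype Λ] [Nonempty Λ] [MeasurableSpace Λ] [MeasurableSingletonClass Λ]
    (n : ℕ) (hn : 0 < n) (hcard : Fintype.card Λ ≤ n)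
    (p : Λ → ℝ) (hp : ∀ l, 0 ≤ p l) (hsum : ∑ l, p l = 1)
    (Xi : Fin n → Ω → Λ) (hmeas : ∀ i, Measurable (Xi i))
    (hindep : iIndepFun Xi ℙ)
    (hlaw : ∀ i l, (ℙ {ω | Xi i ω = l}).toReal = p l)
    (γ : ℝ) (hγ : 0 < γ) :
    1 - 2 * (n : ℝ) ^ (-γ) ≤
      (ℙ {ω | univ.inf' univ_nonempty
            (fun l => ((univ.filter fun i => Xi i ω = l).card : ℝ)) ≥
          univ.inf' univ_nonempty (fun l => n * p l) / 2 -
            2 * (γ + 1) * Real.log n}).toReal :=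
  stmt9_general n hn hcard p Xi hmeas hindep hlaw γ hγ
end
end

section
/- Let (n p̂_λ)_{λ∈Λ_m} be the cell counts of n i.i.d. points in a finite partition with probabilities (p_λ), and suppose D_m · min_λ p_λ ≥ c > 0 where D_m = card(Λ_m). If D_m ≤ c' n / ln(n) for a suitable constant c' depending only on c and γ, then with probability at least 1 − 2n^{−γ}, every cell contains at least one sample point, i.e., min_λ {n p̂_λ} ≥ 1. -/
open MeasureTheory ProbabilityTheory Finset Classical

noncomputable section

/-! A fixed cell `l` stays empty with probability `∏ᵢ (1 - P(Xᵢ = l)) ≤ exp (-q n)` when every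
cell has probability at least `q`, so by the union bound some cell is empty with probability at
most `D exp (-q n)`. With `q = c / D` and `D ≤ c n / ((γ + 1) ln n)` this is at most
`D n^{-(γ+1)} ≤ n^{-γ}`. -/

section EmptyCells

variable {Ω Λ ι : Type*} [MeasurableSpace Ω] {μ : Measure Ω} [IsProbabilityMeasure μ]
  [MeasurableSpace Λ] [MeasurableSingletonClass Λ] [Fintype ι] {X : ι → Ω → Λ}

lemma ProbabilityTheory.iIndepFun.measureReal_forall_ne (hX : ∀ i, Measurable (X i))
    (hind : iIndepFun X μ) (l : Λ) :
    μ.real {ω | ∀ i, X i ω ≠ l} = ∏ i, (1 - μ.real {ω | X i ω = l}) := by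
  have hset : {ω | ∀ i, X i ω ≠ l} = ⋂ i, X i ⁻¹' {l}ᶜ := by ext; simp
  rw [hset, measureReal_def, hind.meas_iInter fun i => ⟨{l}ᶜ, (measurableSet_singleton l).compl,
    rfl⟩, ENNReal.toReal_prod]
  refine prod_congr rfl fun i _ => ?_
  rw [← measureReal_def, Set.preimage_compl,
    probReal_compl_eq_one_sub (hX i (measurableSet_singleton l))]
  rfl

lemma measureReal_exists_forall_ne_le [Fintype Λ] (hX : ∀ i, Measurable (X i))
    (hind : iIndepFun X μ) {q : ℝ} (hq : ∀ i l, q ≤ μ.real {ω | X i ω = l}) :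
    μ.real {ω | ∃ l, ∀ i, X i ω ≠ l} ≤ Fintype.card Λ * Real.exp (-(q * Fintype.card ι)) := by
  have hcell : ∀ l, μ.real {ω | ∀ i, X i ω ≠ l} ≤ Real.exp (-(q * Fintype.card ι)) := by
    intro l
    calc μ.real {ω | ∀ i, X i ω ≠ l} = ∏ i, (1 - μ.real {ω | X i ω = l}) :=
          hind.measureReal_forall_ne hX l
      _ ≤ ∏ _i : ι, Real.exp (-q) := by
          refine prod_le_prod (fun i _ => sub_nonneg.2 measureReal_le_one) fun i _ => ?_
          exact (Real.one_sub_le_exp_neg _).trans (Real.exp_le_exp.2 (neg_le_neg (hq i l)))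
      _ = Real.exp (-(q * Fintype.card ι)) := by
          rw [prod_const, ← Real.exp_nat_mul, card_univ]; ring_nf
  have hset : {ω | ∃ l, ∀ i, X i ω ≠ l} = ⋃ l, {ω | ∀ i, X i ω ≠ l} := by ext; simp
  calc μ.real {ω | ∃ l, ∀ i, X i ω ≠ l} ≤ ∑ l, μ.real {ω | ∀ i, X i ω ≠ l} := by
        rw [hset]; exact measureReal_iUnion_fintype_le _
    _ ≤ ∑ _l : Λ, Real.exp (-(q * Fintype.card ι)) := sum_le_sum fun l _ => hcell l
    _ = Fintype.card Λ * Real.exp (-(q * Fintype.card ι)) := by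
        rw [sum_const, card_univ, nsmul_eq_mul]

end EmptyCells

lemma mul_exp_neg_le_rpow_neg {D n γ t : ℝ} (hn : 0 < n) (hDn : D ≤ n)
    (ht : (γ + 1) * Real.log n ≤ t) : D * Real.exp (-t) ≤ n ^ (-γ) :=
  calc D * Real.exp (-t) ≤ n * n ^ (-(γ + 1)) := by
        refine mul_le_mul hDn ?_ (Real.exp_pos _).le hn.le
        rw [Real.rpow_def_of_pos hn]
        exact Real.exp_le_exp.2 (by linarith)
    _ = n ^ (-γ) := by
        nth_rw 1 [← Real.rpow_one n]
        rw [← Real.rpow_add hn]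
        ring_nf

/-- If the partition is lower-regular (`D_m · min_λ p_λ ≥ c > 0`), then there is a
constant `c' > 0` depending only on `c` and `γ` such that whenever
`D_m ≤ c'·n/ln n`, with probability at least `1 − 2 n^{−γ}` every cell of the
partition contains at least one of the `n` i.i.d. sample points. -/
theorem stmt19 (c γ : ℝ) (hc : 0 < c) (hγ : 0 < γ) :
    ∃ c' : ℝ, 0 < c' ∧
      ∀ (Ω Λ : Type) (_ : MeasureSpace Ω),
        IsProbabilityMeasure (ℙ : Measure Ω) →
        ∀ (_ : Fintype Λ) (_ : Nonempty Λ) (_ : MeasurableSpace Λ),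
        MeasurableSingletonClass Λ →
        ∀ (n : ℕ), 2 ≤ n →
        ∀ (p : Λ → ℝ), (∀ l, 0 ≤ p l) → (∑ l, p l) = 1 →
        Fintype.card Λ ≤ n →
        ∀ (Xi : Fin n → Ω → Λ), (∀ i, Measurable (Xi i)) →
        iIndepFun Xi ℙ →
        (∀ i l, (ℙ {ω | Xi i ω = l}).toReal = p l) →
        (c ≤ (Fintype.card Λ : ℝ) * ⨅ l, p l) →
        ((Fintype.card Λ : ℝ) ≤ c' * n / Real.log n) →
        1 - 2 * (n : ℝ) ^ (-γ) ≤
          (ℙ {ω | ∀ l, 1 ≤ (univ.filter fun i => Xi i ω = l).card}).toReal := by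
  refine ⟨c / (γ + 1), by positivity, ?_⟩
  intro Ω Λ _ _ _ _ _ _ n hn p _ _ hcard Xi hXm hXind hXp hreg hDm
  set D : ℝ := (Fintype.card Λ : ℝ)
  have hD : 0 < D := Nat.cast_pos.2 Fintype.card_pos
  have hlog : 0 < Real.log n := Real.log_pos (by exact_mod_cast hn)
  have hq : ∀ i l, c / D ≤ (ℙ : Measure Ω).real {ω | Xi i ω = l} := fun i l => by
    rw [measureReal_def, hXp, div_le_iff₀' hD]
    exact hreg.trans (mul_le_mul_of_nonneg_left (ciInf_le (Set.finite_range p).bddBelow l) hD.le)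
  have hexp : (γ + 1) * Real.log n ≤ c / D * Fintype.card (Fin n) := by
    rw [Fintype.card_fin, div_mul_eq_mul_div, le_div_iff₀ hD]
    rw [le_div_iff₀ hlog, div_mul_eq_mul_div, le_div_iff₀ (by positivity)] at hDm
    linarith
  have hbad := (measureReal_exists_forall_ne_le hXm hXind hq).trans
    (mul_exp_neg_le_rpow_neg (by positivity) (by exact_mod_cast hcard) hexp)
  have hgood : {ω | ∀ l, 1 ≤ (univ.filter fun i => Xi i ω = l).card}
      = {ω | ∃ l, ∀ i, Xi i ω ≠ l}ᶜ := by
    ext ω; simp [Finset.one_le_card, Finset.filter_nonempty_iff]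
  rw [← measureReal_def, hgood, probReal_compl_eq_one_sub (by measurability)]
  linarith [Real.rpow_nonneg (Nat.cast_nonneg n) (-γ)]
end
end
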